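/- arXiv:math/0402434 — 2 statements merged into one kernel-verified Lean document; each statement's English description precedes it below -/
import Mathlib

section
/- Let G be a finite p-group which does not have the cyclic group of order p as a direct factor, and let C be the largest central elementary abelian subgroup of G. Then every maximal subgroup of G contains C. -/
/-- The largest central elementary abelian subgroup `Ω₁(Z(G))` of a group `G`. -/
def Omega1Center (p : ℕ) (G : Type*) [Group G] : Subgroup G where
  carrier := {g | g ∈ Subgroup.center G ∧ g ^ p = 1}
  one_mem' := ⟨Subgroup.one_mem _, one_pow p⟩
  mul_mem' := by
    rintro a b ⟨ha, hap⟩ ⟨hb, hbp⟩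
    refine ⟨mul_mem ha hb, ?_⟩
    have h : Commute a b := ((Subgroup.mem_center_iff.mp ha) b).symm
    rw [h.mul_pow, hap, hbp, one_mul]
  inv_mem' := by
    rintro a ⟨ha, hap⟩
    exact ⟨inv_mem ha, by rw [inv_pow, hap, inv_one]⟩

/-- The `p`-rank of the centre of `G`. -/
noncomputable def pRankCenter (p : ℕ) (G : Type*) [Group G] : ℕ :=
  (Nat.card (Omega1Center p G)).factorization p

/-- `c : Fin d → A` is a homogeneous system of parameters for the graded `k`-algebra `A`. -/
def IsHSOP (k : Type*) {A : Type*} [CommRing k] [CommRing A] [Algebra k A]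
    (𝒜 : ℕ → Submodule k A) {d : ℕ} (c : Fin d → A) : Prop :=
  (∀ i, SetLike.IsHomogeneousElem 𝒜 (c i)) ∧ AlgebraicIndependent k c ∧
    Module.Finite (Algebra.adjoin k (Set.range c)) A

/-- The essential ideal : classes restricting to zero on every proper subgroup. -/
def essentialIdeal {k : Type*} [Field k] {G : Type*} [Group G]
    {HG : Type*} [CommRing HG] [Algebra k HG]
    {HS : Subgroup G → Type*} [∀ K, CommRing (HS K)] [∀ K, Algebra k (HS K)]
    (res : (K : Subgroup G) → HG →ₐ[k] HS K) : Ideal HG :=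
  ⨅ (K : Subgroup G) (_ : K ≠ ⊤), RingHom.ker (res K).toRingHom

/-- Krull dimension of a module. -/
noncomputable def moduleKrullDim (R : Type*) [CommRing R] (M : Type*) [AddCommGroup M]
    [Module R M] : WithBot ℕ∞ :=
  ringKrullDim (R ⧸ (⊤ : Submodule R M).annihilator)

/-- Depth of a module with respect to an ideal. -/
noncomputable def moduleDepth (R : Type*) [CommRing R] (I : Ideal R) (M : Type*)
    [AddCommGroup M] [Module R M] : WithBot ℕ∞ :=
  ⨆ rs ∈ {rs : List R | (∀ r ∈ rs, r ∈ I) ∧ RingTheory.Sequence.IsRegular M rs},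
    (rs.length : WithBot ℕ∞)

/-- A module over a graded connected `k`-algebra is Cohen--Macaulay if its depth with respect
to the irrelevant (augmentation) ideal equals its Krull dimension. -/
def IsCohenMacaulayGradedMod {k A : Type*} [Field k] [CommRing A] [Algebra k A]
    (𝒜 : ℕ → Submodule k A) [GradedAlgebra 𝒜]
    (M : Type*) [AddCommGroup M] [Module A M] : Prop :=
  moduleDepth A (HomogeneousIdeal.irrelevant 𝒜).toIdeal M = moduleKrullDim A M

/-!
If `z ∈ Ω₁(Z(G))` lies outside a maximal subgroup `K`, then `⟨z⟩` has order `p`, so it meets `K`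
trivially, and maximality gives `K ⊔ ⟨z⟩ = G`. As `z` is central, multiplication
`K × ⟨z⟩ → G` is then an isomorphism, exhibiting `C_p ≅ ⟨z⟩` as a direct factor.
-/

namespace Subgroup

variable {G : Type*} [Group G]

theorem disjoint_of_prime_card_of_not_le {H K : Subgroup G} (hH : (Nat.card H).Prime)
    (hHK : ¬ H ≤ K) : Disjoint K H := by
  have : Fact (Nat.card H).Prime := ⟨hH⟩
  rcases (K.subgroupOf H).eq_bot_or_eq_top_of_prime_card with h | h
  · exact subgroupOf_eq_bot.mp h
  · exact absurd (subgroupOf_eq_top.mp h) hHK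

noncomputable def prodMulEquivOfLeCenter {H N : Subgroup G} (hN : N ≤ center G)
    (hdisj : Disjoint H N) (hsup : H ⊔ N = ⊤) : H × N ≃* G :=
  let comm : ∀ (h : H) (n : N), Commute (H.subtype h) (N.subtype n) :=
    fun h n => mem_center_iff.mp (hN n.2) h
  MulEquiv.ofBijective (H.subtype.noncommCoprod N.subtype comm)
    ⟨(MonoidHom.noncommCoprod_injective _ _ comm).mpr
        ⟨H.subtype_injective, N.subtype_injective, by simpa only [range_subtype] using hdisj⟩,
      MonoidHom.range_eq_top.mp <| by
        rw [MonoidHom.noncommCoprod_range, range_subtype, range_subtype, hsup]⟩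

end Subgroup

open Subgroup

noncomputable def mulEquivProdOfCoatomOfNotMem {G : Type*} [Group G] {p : ℕ} [Fact p.Prime]
    {K : Subgroup G} (hK : IsCoatom K) {z : G} (hzc : z ∈ center G) (hz : orderOf z = p)
    (hzK : z ∉ K) : G ≃* K × Multiplicative (ZMod p) :=
  have hcard : Nat.card (zpowers z) = p := by rw [Nat.card_zpowers, hz]
  have hnotle : ¬ zpowers z ≤ K := fun h => hzK (h (mem_zpowers z))
  (prodMulEquivOfLeCenter (zpowers_le.mpr hzc)
      (disjoint_of_prime_card_of_not_le (hcard ▸ Fact.out) hnotle)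
      (codisjoint_iff.mp (hK.not_le_iff_codisjoint.mp hnotle))).symm.trans
    (MulEquiv.prodCongr (MulEquiv.refl K)
      (mulEquivOfPrimeCardEq hcard (by simp [Nat.card_eq_fintype_card])))

theorem omega1Center_le_maximal_subgroup_general
    (p : ℕ) [Fact p.Prime]
    (G : Type) [Group G]
    -- `G` does not have the cyclic group of order `p` as a direct factor
    (hfac : ∀ (H : Type) [Group H], ¬ Nonempty (G ≃* H × Multiplicative (ZMod p)))
    -- every maximal subgroup contains the largest central elementary abelian subgroup
    (K : Subgroup G) (hK : IsCoatom K) :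
    Omega1Center p G ≤ K := by
  rintro z ⟨hzc, hzp⟩
  by_contra hzK
  have hz : orderOf z = p := orderOf_eq_prime hzp (fun h => hzK (h ▸ K.one_mem))
  exact hfac K ⟨mulEquivProdOfCoatomOfNotMem hK hzc hz hzK⟩

/-- every maximal subgroup contains `C` when `C_p` is not a direct factor. -/
theorem omega1Center_le_maximal_subgroup
    (p : ℕ) [Fact p.Prime]
    (G : Type) [Group G] [Finite G] (hG : IsPGroup p G)
    -- `G` does not have the cyclic group of order `p` as a direct factor
    (hfac : ∀ (H : Type) [Group H], ¬ Nonempty (G ≃* H × Multiplicative (ZMod p)))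
    -- every maximal subgroup contains the largest central elementary abelian subgroup
    (K : Subgroup G) (hK : IsCoatom K) :
    Omega1Center p G ≤ K :=
  omega1Center_le_maximal_subgroup_general p G hfac K hK
end

section
/- Let R be a graded polynomial algebra over a field k and let T be a graded R-module equipped with a descending chain of graded R-submodules T = T_{i_0} ⊇ T_{i_0+1} ⊇ T_{i_0+2} ⊇ ⋯ such that ⋂_{i ≥ i_0} T_i = {0}, each T_i is concentrated in degrees ≥ i, and each quotient T_i/T_{i+1} is a free R-module. Then T is a free R-module. -/
/-!
Choose `R`-linear splittings of the projections `Tᵢ → Tᵢ/Tᵢ₊₁` (the quotients are free, hence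
projective) and replace each splitting `u` by its degree-preserving part
`x ↦ ∑ₙ (u xₙ)ₙ`. Since `R` is graded, this part is still `R`-linear, and it is still a
splitting because the `Tᵢ` are graded submodules. The splittings assemble to a map
`⨁ᵢ Tᵢ/Tᵢ₊₁ → T`, injective because the filtration is descending, and surjective because a
homogeneous element of degree `n` can be peeled off through the first few steps of the
filtration, after which it lies in a `Tᵢ` concentrated in degrees `> n` and so vanishes.
-/

open DirectSum

section GradedProj

variable {k T : Type*} [Semiring k] [AddCommGroup T] [Module k T]
  (𝒯 : ℕ → Submodule k T) [Decomposition 𝒯]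

def gradedProj (n : ℕ) : T →ₗ[k] T :=
  (𝒯 n).subtype ∘ₗ component k ℕ (fun n => 𝒯 n) n ∘ₗ (decomposeLinearEquiv 𝒯).toLinearMap

@[simp]
theorem gradedProj_apply (n : ℕ) (x : T) : gradedProj 𝒯 n x = decompose 𝒯 x n := rfl

/-- `x ↦ ∑ₙ gradedProj 𝒯 n (f (gradedProj 𝒯 n x))`. -/
def homogenize (f : T →ₗ[k] T) : T →ₗ[k] T :=
  toModule k ℕ T (fun n => gradedProj 𝒯 n ∘ₗ f ∘ₗ (𝒯 n).subtype) ∘ₗ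
    (decomposeLinearEquiv 𝒯).toLinearMap

variable {𝒯}

theorem homogenize_apply_of_mem (f : T →ₗ[k] T) {n : ℕ} {x : T} (hx : x ∈ 𝒯 n) :
    homogenize 𝒯 f x = gradedProj 𝒯 n (f x) := by
  have hdec : decomposeLinearEquiv 𝒯 x = lof k ℕ (fun n => 𝒯 n) n ⟨x, hx⟩ := by
    rw [decomposeLinearEquiv_apply, decompose_of_mem 𝒯 hx, lof_eq_of]
  simp only [homogenize, LinearMap.comp_apply, LinearEquiv.coe_coe, hdec, toModule_lof]
  rfl

theorem DirectSum.SetLike.IsHomogeneous.map_mem {P : Type*} [SetLike P T] {C : P}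
    (hC : SetLike.IsHomogeneous 𝒯 C) {F N Q : Type*} [AddCommMonoid N] [FunLike F T N]
    [AddMonoidHomClass F T N] [SetLike Q N] [AddSubmonoidClass Q N] (φ : F) {S : Q}
    (h : ∀ n, ∀ y ∈ 𝒯 n, y ∈ C → φ y ∈ S) {x : T} (hx : x ∈ C) : φ x ∈ S := by
  classical
  rw [← sum_support_decompose 𝒯 x, map_sum]
  exact sum_mem fun n _ => h n _ (decompose 𝒯 x n).2 (hC n hx)

theorem DirectSum.SetLike.IsHomogeneous.inf {R : Type*} [Semiring R] [Module R T]
    {C D : Submodule R T} (hC : SetLike.IsHomogeneous 𝒯 C) (hD : SetLike.IsHomogeneous 𝒯 D) :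
    SetLike.IsHomogeneous 𝒯 (C ⊓ D) :=
  fun n _ hx => ⟨hC n hx.1, hD n hx.2⟩

end GradedProj

section Homogenize

variable {k R T : Type*} [CommSemiring k] [Ring R] [Algebra k R] [AddCommGroup T] [Module k T]
  [Module R T] {𝒯 : ℕ → Submodule k T} [Decomposition 𝒯]

theorem gradedProj_smul_of_mem {ℛ : ℕ → Submodule k R} [SetLike.GradedSMul ℛ 𝒯] {a : R}
    {m : ℕ} (ha : a ∈ ℛ m) (n : ℕ) (x : T) :
    gradedProj 𝒯 (m + n) (a • x) = a • gradedProj 𝒯 n x := by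
  induction x using Decomposition.inductionOn 𝒯 with
  | zero => simp
  | add x y hx hy => rw [smul_add, map_add, map_add, hx, hy, smul_add]
  | @homogeneous i y =>
    have hay : a • (y : T) ∈ 𝒯 (m + i) := SetLike.GradedSMul.smul_mem ha y.2
    by_cases hin : i = n
    · subst hin
      rw [gradedProj_apply, gradedProj_apply, decompose_of_mem_same 𝒯 hay,
        decompose_of_mem_same 𝒯 y.2]
    · rw [gradedProj_apply, gradedProj_apply, decompose_of_mem_ne 𝒯 hay (by omega),
        decompose_of_mem_ne 𝒯 y.2 hin, smul_zero]

theorem homogenize_smul (ℛ : ℕ → Submodule k R) [Decomposition ℛ] [SetLike.GradedSMul ℛ 𝒯]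
    {C : Submodule R T} (hC : SetLike.IsHomogeneous 𝒯 C) {f : T →ₗ[k] T}
    (hf : ∀ (a : R), ∀ x ∈ C, f (a • x) = a • f x) (a : R) {x : T} (hx : x ∈ C) :
    homogenize 𝒯 f (a • x) = a • homogenize 𝒯 f x := by
  classical
  induction a using Decomposition.inductionOn ℛ with
  | zero => simp
  | add a b ha hb => rw [add_smul, add_smul, map_add, ha, hb]
  | @homogeneous m a =>
    rw [← sum_support_decompose 𝒯 x, Finset.smul_sum, map_sum, map_sum, Finset.smul_sum]
    refine Finset.sum_congr rfl fun n _ => ?_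
    have hy := (decompose 𝒯 x n).2
    rw [homogenize_apply_of_mem f hy,
      homogenize_apply_of_mem f (SetLike.GradedSMul.smul_mem a.2 hy), hf a _ (hC n hx)]
    exact gradedProj_smul_of_mem a.2 n _

end Homogenize

theorem Submodule.sub_mem_of_mkQ_comp_eq_id {R N : Type*} [Ring R] [AddCommGroup N]
    [Module R N] {p : Submodule R N} {s : N ⧸ p →ₗ[R] N} (hs : p.mkQ ∘ₗ s = LinearMap.id)
    (x : N) : x - s (Submodule.Quotient.mk x) ∈ p :=
  (Submodule.Quotient.eq p).mp (LinearMap.congr_fun hs (Submodule.Quotient.mk x)).symm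

theorem Submodule.eq_zero_of_mkQ_comp_eq_id {R N : Type*} [Ring R] [AddCommGroup N]
    [Module R N] {p : Submodule R N} {s : N ⧸ p →ₗ[R] N} (hs : p.mkQ ∘ₗ s = LinearMap.id)
    {q : N ⧸ p} (hq : s q ∈ p) : q = 0 := by
  rw [← LinearMap.id_apply (R := R) q, ← hs, LinearMap.comp_apply, Submodule.mkQ_apply,
    Submodule.Quotient.mk_eq_zero]
  exact hq

section GradedSection

variable {k R T : Type*} [Field k] [Ring R] [Algebra k R] [AddCommGroup T] [Module k T]
  [Module R T] [IsScalarTower k R T] {𝒯 : ℕ → Submodule k T} [Decomposition 𝒯]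

theorem exists_homogenization (ℛ : ℕ → Submodule k R) [Decomposition ℛ]
    [SetLike.GradedSMul ℛ 𝒯] {C : Submodule R T} (hC : SetLike.IsHomogeneous 𝒯 C)
    (f : C →ₗ[R] T) : ∃ ψ : T →ₗ[k] T,
      (∀ n x (hx : x ∈ C), x ∈ 𝒯 n → ψ x = gradedProj 𝒯 n (f ⟨x, hx⟩)) ∧
      ∀ (a : R), ∀ x ∈ C, ψ (a • x) = a • ψ x := by
  obtain ⟨g, hg⟩ := LinearMap.exists_extend
    (f.restrictScalars k ∘ₗ (C.restrictScalarsEquiv k).toLinearMap.restrictScalars k)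
  have hgf : ∀ x (hx : x ∈ C), g x = f ⟨x, hx⟩ := fun x hx => LinearMap.congr_fun hg ⟨x, hx⟩
  refine ⟨homogenize 𝒯 g, fun n x hx hxn => by rw [homogenize_apply_of_mem g hxn, hgf x hx],
    homogenize_smul ℛ hC fun a x hx => ?_⟩
  rw [hgf x hx, hgf _ (C.smul_mem a hx), ← map_smul]
  rfl

theorem exists_gradedSection (ℛ : ℕ → Submodule k R) [Decomposition ℛ]
    [SetLike.GradedSMul ℛ 𝒯] {C D : Submodule R T} (hC : SetLike.IsHomogeneous 𝒯 C)
    (hD : SetLike.IsHomogeneous 𝒯 D) [Module.Projective R (C ⧸ D.comap C.subtype)] :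
    ∃ s : (C ⧸ D.comap C.subtype) →ₗ[R] C, (D.comap C.subtype).mkQ ∘ₗ s = LinearMap.id ∧
      ∀ n (x : C), (x : T) ∈ 𝒯 n → (s (Submodule.Quotient.mk x) : T) ∈ 𝒯 n := by
  set p := D.comap C.subtype
  obtain ⟨s₀, hs₀⟩ := Module.projective_lifting_property p.mkQ LinearMap.id p.mkQ_surjective
  obtain ⟨ψ, hψ, hψ_smul⟩ := exists_homogenization ℛ hC (C.subtype ∘ₗ s₀ ∘ₗ p.mkQ)
  have hψ_mem : ∀ x ∈ C, ψ x ∈ C := fun x hx => hC.map_mem ψ (fun n y hyn hy => by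
    rw [hψ n y hy hyn]
    exact hC n (s₀ _).2) hx
  have hψ_sub : ∀ x ∈ C, x - ψ x ∈ D := fun x hx => hC.map_mem (LinearMap.id - ψ)
    (fun n y hyn hy => by
      have hy_eq : gradedProj 𝒯 n y = y := by
        rw [gradedProj_apply, decompose_of_mem_same 𝒯 hyn]
      have hyD : y - s₀ (Submodule.Quotient.mk ⟨y, hy⟩) ∈ D :=
        Submodule.sub_mem_of_mkQ_comp_eq_id hs₀ ⟨y, hy⟩
      have := hD n hyD
      rw [← gradedProj_apply, map_sub, hy_eq] at this
      rwa [LinearMap.sub_apply, LinearMap.id_apply, hψ n y hy hyn]) hx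
  have hψ_zero : ∀ x ∈ C ⊓ D, ψ x = 0 := fun x hx =>
    (hC.inf hD).map_mem ψ (S := (⊥ : Submodule k T)) (fun n y hyn hy => by
      rw [hψ n y hy.1 hyn, LinearMap.comp_apply, LinearMap.comp_apply, Submodule.mkQ_apply,
        (Submodule.Quotient.mk_eq_zero p).mpr hy.2]
      simp) hx
  let ψC : C →ₗ[R] C := LinearMap.codRestrict C
    { toFun := fun x => ψ x
      map_add' := fun x y => by simp
      map_smul' := fun a x => hψ_smul a x x.2 } fun x => hψ_mem x x.2
  refine ⟨p.liftQ ψC fun x hx => Subtype.ext (hψ_zero x ⟨x.2, hx⟩), ?_, fun n x hxn => ?_⟩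
  · refine p.linearMap_qext (LinearMap.ext fun x => ?_)
    simp only [LinearMap.comp_apply, Submodule.mkQ_apply, LinearMap.id_apply,
      Submodule.Quotient.eq]
    exact sub_mem_comm_iff.mp (hψ_sub x x.2)
  · show ψ x ∈ 𝒯 n
    rw [hψ n x x.2 hxn]
    exact (decompose 𝒯 _ n).2

end GradedSection

section Filtration

variable {R M : Type*} [Ring R] [AddCommGroup M] [Module R M] (C : ℕ → Submodule R M)

abbrev FiltrationQuotient (j : ℕ) : Type _ := C j ⧸ (C (j + 1)).comap (C j).subtype

def sumOfSections (s : ∀ j, FiltrationQuotient C j →ₗ[R] C j) :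
    (⨁ j, FiltrationQuotient C j) →ₗ[R] M :=
  toModule R ℕ M fun j => (C j).subtype ∘ₗ s j

open Classical in
theorem sumOfSections_apply (s : ∀ j, FiltrationQuotient C j →ₗ[R] C j)
    (w : ⨁ j, FiltrationQuotient C j) :
    sumOfSections C s w = ∑ j ∈ w.support, (s j (w j) : M) := by
  rw [sumOfSections, toModule, DFinsupp.lsum_apply_apply, DFinsupp.sumAddHom_apply]
  rfl

variable {C}

theorem sumOfSections_injective (hC : Antitone C) {s : ∀ j, FiltrationQuotient C j →ₗ[R] C j}
    (hs : ∀ j, ((C (j + 1)).comap (C j).subtype).mkQ ∘ₗ s j = LinearMap.id) :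
    Function.Injective (sumOfSections C s) := by
  classical
  refine (injective_iff_map_eq_zero _).mpr fun w hw => ?_
  by_contra hne
  have hsupp : w.support.Nonempty := by
    rw [Finset.nonempty_iff_ne_empty, Ne, DFinsupp.support_eq_empty]
    exact hne
  set j := w.support.min' hsupp
  have hrest : ∑ m ∈ w.support.erase j, (s m (w m) : M) ∈ C (j + 1) :=
    sum_mem fun m hm => hC (Nat.succ_le_of_lt (lt_of_le_of_ne
      (w.support.min'_le m (Finset.mem_of_mem_erase hm)) (Finset.ne_of_mem_erase hm).symm))
      (s m (w m)).2
  have hj : (s j (w j) : M) ∈ C (j + 1) := by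
    rw [sumOfSections_apply, ← Finset.add_sum_erase _ _ (w.support.min'_mem hsupp)] at hw
    rw [eq_neg_of_add_eq_zero_left hw]
    exact neg_mem hrest
  exact DFinsupp.mem_support_iff.mp (w.support.min'_mem hsupp)
    (Submodule.eq_zero_of_mkQ_comp_eq_id (hs j) hj)

theorem sumOfSections_surjective {k : Type*} [Ring k] [Module k M]
    {𝒯 : ℕ → Submodule k M} [Decomposition 𝒯] (hC0 : C 0 = ⊤)
    (hconc : ∀ j n, n < j → ∀ x ∈ C j, (decompose 𝒯 x n : M) = 0)
    {s : ∀ j, FiltrationQuotient C j →ₗ[R] C j}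
    (hs : ∀ j, ((C (j + 1)).comap (C j).subtype).mkQ ∘ₗ s j = LinearMap.id)
    (hdeg : ∀ j n (x : C j), (x : M) ∈ 𝒯 n → (s j (Submodule.Quotient.mk x) : M) ∈ 𝒯 n) :
    Function.Surjective (sumOfSections C s) := by
  have mem_range : ∀ c j n x, x ∈ 𝒯 n → x ∈ C j → n < j + c →
      x ∈ LinearMap.range (sumOfSections C s) := by
    intro c
    induction c with
    | zero =>
      intro j n x hxn hxC hn
      rw [← decompose_of_mem_same 𝒯 hxn, hconc j n hn x hxC]
      exact zero_mem _
    | succ c ih =>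
      intro j n x hxn hxC hn
      set y : M := (s j (Submodule.Quotient.mk ⟨x, hxC⟩) : M)
      have hy : y ∈ LinearMap.range (sumOfSections C s) :=
        ⟨lof R ℕ _ j (Submodule.Quotient.mk ⟨x, hxC⟩), by simp [sumOfSections, y]⟩
      have hxy : x - y ∈ C (j + 1) := Submodule.sub_mem_of_mkQ_comp_eq_id (hs j) ⟨x, hxC⟩
      have := add_mem hy
        (ih (j + 1) n (x - y) (sub_mem hxn (hdeg j n ⟨x, hxC⟩ hxn)) hxy (by omega))
      rwa [add_sub_cancel] at this
  rw [← LinearMap.range_eq_top, eq_top_iff]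
  rintro x -
  classical
  rw [← sum_support_decompose 𝒯 x]
  exact sum_mem fun n _ => mem_range (n + 1) 0 n _ (decompose 𝒯 x n).2 (by simp [hC0]) (by omega)

end Filtration

theorem Module.Free.of_gradedFiltration {k R T : Type*} [Field k] [Ring R] [Algebra k R]
    [AddCommGroup T] [Module k T] [Module R T] [IsScalarTower k R T]
    (ℛ : ℕ → Submodule k R) [Decomposition ℛ] (𝒯 : ℕ → Submodule k T) [Decomposition 𝒯]
    [SetLike.GradedSMul ℛ 𝒯] (C : ℕ → Submodule R T) (hC : Antitone C) (hC0 : C 0 = ⊤)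
    (hhom : ∀ j, SetLike.IsHomogeneous 𝒯 (C j))
    (hconc : ∀ j n, n < j → ∀ x ∈ C j, (decompose 𝒯 x n : T) = 0)
    [∀ j, Module.Free R (FiltrationQuotient C j)] : Module.Free R T := by
  choose s hs hdeg using fun j => exists_gradedSection ℛ (hhom j) (hhom (j + 1))
  exact Module.Free.of_equiv (LinearEquiv.ofBijective (sumOfSections C s)
    ⟨sumOfSections_injective hC hs, sumOfSections_surjective hC0 hconc hs hdeg⟩)

theorem free_of_free_graded_filtration_general
    (k : Type) [Field k]
    -- `R = k[ζ₁,…,ζ_d]`, a graded polynomial `k`-algebra on homogeneous generators of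
    -- positive degree
    (R : Type) [CommRing R] [Algebra k R]
    (ℛ : ℕ → Submodule k R) [GradedAlgebra ℛ]
    -- `T` a graded `R`-module (graded in degrees `≥ 0`, hence bounded below)
    (T : Type) [AddCommGroup T] [Module k T] [Module R T] [IsScalarTower k R T]
    (𝒯 : ℕ → Submodule k T) [DirectSum.Decomposition 𝒯]
    (hgrT : ∀ (m n : ℕ) (a : R) (x : T), a ∈ ℛ m → x ∈ 𝒯 n → a • x ∈ 𝒯 (m + n))
    -- a descending chain of graded submodules `T = T_{i₀} ⊇ T_{i₀+1} ⊇ ⋯`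
    (i₀ : ℕ) (chain : ℕ → Submodule R T)
    (htop : chain i₀ = ⊤)
    (hdesc : ∀ i, i₀ ≤ i → chain (i + 1) ≤ chain i)
    (hchaingr : ∀ i, i₀ ≤ i → ∀ x ∈ chain i, ∀ j,
      (DirectSum.decompose 𝒯 x j : T) ∈ chain i)
    -- each `T_i` concentrated in degrees `≥ i`,
    (hconc : ∀ i, i₀ ≤ i → ∀ x ∈ chain i, ∀ j, j < i →
      (DirectSum.decompose 𝒯 x j : T) = 0)
    -- and each quotient `T_i/T_{i+1}` a free `R`-module
    (hfree : ∀ i, i₀ ≤ i →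
      Module.Free R (↥(chain i) ⧸ (chain (i + 1)).comap (chain i).subtype)) :
    -- then `T` is a free `R`-module
    Module.Free R T := by
  have hi₀ : ∀ j, i₀ ≤ i₀ + j := Nat.le_add_right i₀
  have : SetLike.GradedSMul ℛ 𝒯 := ⟨fun {m n _ _} ha hx => hgrT m n _ _ ha hx⟩
  have : ∀ j, Module.Free R (FiltrationQuotient (fun j => chain (i₀ + j)) j) :=
    fun j => hfree _ (hi₀ j)
  exact Module.Free.of_gradedFiltration ℛ 𝒯 (fun j => chain (i₀ + j))
    (antitone_nat_of_succ_le fun j => hdesc _ (hi₀ j)) htop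
    (fun j n x hx => hchaingr _ (hi₀ j) x hx n)
    (fun j n hn x hx => hconc _ (hi₀ j) x hx n (by omega))

/-- a graded module with a free exhaustive filtration is free. -/
theorem free_of_free_graded_filtration
    (k : Type) [Field k]
    -- `R = k[ζ₁,…,ζ_d]`, a graded polynomial `k`-algebra on homogeneous generators of
    -- positive degree
    (R : Type) [CommRing R] [Algebra k R]
    (ℛ : ℕ → Submodule k R) [GradedAlgebra ℛ]
    (d : ℕ) (g : Fin d → R)
    (hgind : AlgebraicIndependent k g)
    (hgtop : Algebra.adjoin k (Set.range g) = ⊤)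
    (hghom : ∀ i, ∃ n, 0 < n ∧ g i ∈ ℛ n)
    -- `T` a graded `R`-module (graded in degrees `≥ 0`, hence bounded below)
    (T : Type) [AddCommGroup T] [Module k T] [Module R T] [IsScalarTower k R T]
    (𝒯 : ℕ → Submodule k T) [DirectSum.Decomposition 𝒯]
    (hgrT : ∀ (m n : ℕ) (a : R) (x : T), a ∈ ℛ m → x ∈ 𝒯 n → a • x ∈ 𝒯 (m + n))
    -- a descending chain of graded submodules `T = T_{i₀} ⊇ T_{i₀+1} ⊇ ⋯`
    (i₀ : ℕ) (chain : ℕ → Submodule R T)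
    (htop : chain i₀ = ⊤)
    (hdesc : ∀ i, i₀ ≤ i → chain (i + 1) ≤ chain i)
    (hchaingr : ∀ i, i₀ ≤ i → ∀ x ∈ chain i, ∀ j,
      (DirectSum.decompose 𝒯 x j : T) ∈ chain i)
    -- with trivial intersection,
    (hinter : ⨅ (i : ℕ) (_ : i₀ ≤ i), chain i = ⊥)
    -- each `T_i` concentrated in degrees `≥ i`,
    (hconc : ∀ i, i₀ ≤ i → ∀ x ∈ chain i, ∀ j, j < i →
      (DirectSum.decompose 𝒯 x j : T) = 0)
    -- and each quotient `T_i/T_{i+1}` a free `R`-module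
    (hfree : ∀ i, i₀ ≤ i →
      Module.Free R (↥(chain i) ⧸ (chain (i + 1)).comap (chain i).subtype)) :
    -- then `T` is a free `R`-module
    Module.Free R T :=
  free_of_free_graded_filtration_general k R ℛ T 𝒯 hgrT i₀ chain htop hdesc hchaingr hconc hfree
end
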